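/- Let f be a k-th order sensitive function on d variables with witnessing point y ∈ F_2^d. Define y^1 = y, y^u ∈ F_2^{d^u} the concatenation of d copies of y^{u−1}, f^1 = f, and f^u(x) = f( f^{u−1}(block_1 of x) ⊕ f^{u−1}(y^{u−1}) ⊕ y_1, ..., f^{u−1}(block_d of x) ⊕ f^{u−1}(y^{u−1}) ⊕ y_d ), where block_j of x is the j-th consecutive block of d^{u−1} coordinates. Then f^u is k-th order sensitive at the point y^u, and f^u(y^u) = f(y). -/

import Mathlib

/-- Flip the bits of `x` indexed by `S`. -/
def flipS {ι : Type*} [DecidableEq ι] (x : ι → Bool) (S : Finset ι) : ι → Bool :=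
  fun i => if i ∈ S then !x i else x i

/-- `Yu d y u` is the concatenation of `d^u` copies of `y`, i.e. `y^{u+1}` on
`d^{u+1}` coordinates (indexed by tuples `Fin (u+1) → Fin d`). -/
def Yu (d : ℕ) (y : Fin d → Bool) (u : ℕ) : (Fin (u + 1) → Fin d) → Bool :=
  fun t => y (t (Fin.last u))

/-- The modified recursive amplification `f^{u+1}` of a base function `f` with
witnessing point `y`:
`f^{u+1}(x) = f(…, f^u(block_j x) ⊕ f^u(y^u) ⊕ y_j, …)`. -/
def Fu (d : ℕ) (f : (Fin d → Bool) → Bool) (y : Fin d → Bool) :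
    (u : ℕ) → ((Fin (u + 1) → Fin d) → Bool) → Bool
  | 0 => fun x => f (fun i => x (fun _ => i))
  | u + 1 => fun x => f (fun j =>
      xor (xor (Fu d f y u (fun t => x (Fin.cons j t))) (Fu d f y u (Yu d y u))) (y j))

/-!
By induction on `u`, every argument of the outer `f` in `f^{u+1}(y^{u+1} ⊕ e_S)` is `y_j`, flipped
exactly when `S` meets block `j`: an untouched block gives `f^u(y^u)`, which cancels against the
correction term, and a block touched in at most `k` bits gives `¬f^u(y^u)` by sensitivity of
`f^u`. So the outer argument is `y` flipped on the (between `1` and `k`) blocks met by `S`.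
-/

open Finset

def IsSensitiveAt {ι : Type*} [DecidableEq ι] (k : ℕ) (g : (ι → Bool) → Bool) (x : ι → Bool) :
    Prop :=
  ∀ S : Finset ι, 1 ≤ S.card → S.card ≤ k → g (flipS x S) ≠ g x

section flipS

variable {ι κ : Type*} [DecidableEq ι] [DecidableEq κ]

theorem flipS_apply (x : ι → Bool) (S : Finset ι) (i : ι) :
    flipS x S i = xor (x i) (decide (i ∈ S)) := by
  by_cases h : i ∈ S <;> simp [flipS, h]

theorem flipS_empty (x : ι → Bool) : flipS x ∅ = x := by
  funext i
  simp [flipS]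

theorem flipS_comp {g : κ → ι} (hg : g.Injective) (x : ι → Bool) (S : Finset ι) :
    (fun b => flipS x S (g b)) = flipS (fun b => x (g b)) (S.preimage g hg.injOn) := by
  funext b
  simp only [flipS, mem_preimage]

theorem IsSensitiveAt.apply_flipS {k : ℕ} {g : (ι → Bool) → Bool} {x : ι → Bool}
    (hg : IsSensitiveAt k g x) {S : Finset ι} (hS : S.card ≤ k) :
    g (flipS x S) = xor (g x) (decide S.Nonempty) := by
  rcases S.eq_empty_or_nonempty with rfl | hne
  · simp [flipS_empty]
  · simpa [hne] using Bool.eq_not.mpr (hg S (card_pos.mpr hne) hS)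

end flipS

theorem Finset.card_preimage_le {α β : Type*} (s : Finset β) (f : α → β) (hf) :
    (s.preimage f hf).card ≤ s.card := by
  classical
  rw [card_preimage]
  exact card_filter_le _ _

theorem Finset.card_preimage_of_surjective {α β : Type*} (s : Finset β) {f : α → β}
    (hsurj : f.Surjective) (hf) : (s.preimage f hf).card = s.card := by
  classical
  rw [card_preimage]
  exact congrArg card (filter_true_of_mem fun b _ => hsurj b)

theorem Finset.preimage_cons_nonempty_iff {n : ℕ} {α : Type*} [DecidableEq α]
    (S : Finset (Fin (n + 1) → α)) (a : α) :
    (S.preimage (Fin.cons a) (Fin.cons_right_injective (α := fun _ => α) a).injOn).Nonempty ↔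
      a ∈ S.image (· 0) := by
  simp only [Finset.Nonempty, mem_preimage, mem_image]
  constructor
  · rintro ⟨t, ht⟩
    exact ⟨_, ht, Fin.cons_zero (α := fun _ => α) a t⟩
  · rintro ⟨s, hs, rfl⟩
    exact ⟨Fin.tail s, by rwa [Fin.cons_self_tail]⟩

section Amplification

variable {d : ℕ} {f : (Fin d → Bool) → Bool} {y : Fin d → Bool}

theorem Yu_comp_cons (u : ℕ) (j : Fin d) :
    (fun t => Yu d y (u + 1) (Fin.cons j t)) = Yu d y u := by
  funext t
  simp only [Yu, ← Fin.succ_last, Fin.cons_succ]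

theorem Fu_Yu (u : ℕ) : Fu d f y u (Yu d y u) = f y := by
  cases u with
  | zero => rfl
  | succ u =>
    simp only [Fu, Yu_comp_cons, Bool.xor_self, Bool.false_xor]

theorem isSensitiveAt_Fu_zero {k : ℕ} (hs : IsSensitiveAt k f y) :
    IsSensitiveAt k (Fu d f y 0) (Yu d y 0) := by
  intro S h1 h2
  have hconst : Function.Bijective fun (i : Fin d) (_ : Fin 1) => i :=
    (Equiv.funUnique (Fin 1) (Fin d)).symm.bijective
  have hcard := S.card_preimage_of_surjective hconst.2 hconst.1.injOn
  rw [Fu_Yu]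
  dsimp only [Fu]
  rw [flipS_comp hconst.1]
  exact hs _ (hcard ▸ h1) (hcard ▸ h2)

theorem isSensitiveAt_Fu_succ {k u : ℕ} (hs : IsSensitiveAt k f y)
    (ih : IsSensitiveAt k (Fu d f y u) (Yu d y u)) :
    IsSensitiveAt k (Fu d f y (u + 1)) (Yu d y (u + 1)) := by
  intro S h1 h2
  have hinner : (fun j => xor (xor (Fu d f y u fun t => flipS (Yu d y (u + 1)) S (Fin.cons j t))
      (Fu d f y u (Yu d y u))) (y j)) = flipS y (S.image (· 0)) := by
    funext j
    rw [flipS_comp (Fin.cons_right_injective (α := fun _ => Fin d) j), Yu_comp_cons,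
      ih.apply_flipS ((card_preimage_le _ _ _).trans h2), flipS_apply]
    simp [preimage_cons_nonempty_iff, Bool.xor_comm]
  rw [Fu_Yu]
  dsimp only [Fu]
  rw [hinner]
  exact hs _ (card_pos.mpr ((card_pos.mp h1).image _)) (card_image_le.trans h2)

end Amplification

/-- If `f` is `k`-th order sensitive at `y`, then every `f^u` is `k`-th order
sensitive at `y^u`, and `f^u(y^u) = f(y)`. -/
theorem stmt17 (d k : ℕ) (f : (Fin d → Bool) → Bool) (y : Fin d → Bool)
    (hs : ∀ S : Finset (Fin d), 1 ≤ S.card → S.card ≤ k → f (flipS y S) ≠ f y) :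
    ∀ u : ℕ,
      (∀ S : Finset (Fin (u + 1) → Fin d), 1 ≤ S.card → S.card ≤ k →
        Fu d f y u (flipS (Yu d y u) S) ≠ Fu d f y u (Yu d y u)) ∧
      Fu d f y u (Yu d y u) = f y := by
  intro u
  refine ⟨?_, Fu_Yu u⟩
  induction u with
  | zero => exact isSensitiveAt_Fu_zero hs
  | succ u ih => exact isSensitiveAt_Fu_succ hs ih
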